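/- arXiv:1003.5172 — 3 statements merged into one kernel-verified Lean document; each statement's English description precedes it below -/
import Mathlib

section
/- Let p, q' ≥ 2 and set N = p + q'. In ℝ^N consider the positive roots of D_N, namely e_i ± e_j for 1 ≤ i < j ≤ N. Let ρ^g = ∑_{i=1}^N (N - i) e_i, ρ^k = ∑_{i=1}^p (p - i) e_i + ∑_{j=1}^{q'} (q' - j) e_{p+j}, and μ₁ = q' e_1 + (q'-1)∑_{i=2}^p e_i + (p-1) e_{p+1}. Then the coordinates of μ₁ + ρ^k are a permutation of the coordinates of ρ^g, and consequently ∏_{α∈R⁺} ⟨μ₁ + ρ^k, α⟩ = ± ∏_{α∈R⁺} ⟨ρ^g, α⟩. -/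
/-!
In 0-based coordinates, `μ₁ + ρ^k` takes at `0` the value `N - 1`, at `0 < i < p` the value
`N - 2 - i`, at `p` the value `N - 2`, and agrees with `ρ^g` beyond `p`; so it is `ρ^g` composed
with the cycle `(1 2 … p)`. Since `⟨v, e_i - e_j⟩⟨v, e_i + e_j⟩ = v_i² - v_j²`, the root product
is, up to a sign independent of `v`, the Vandermonde determinant of the squared coordinates,
which is alternating under permutations of the coordinates.
-/

open Finset Equiv

/-- The product of `⟨v, α⟩` over the positive roots `e_i ± e_j` (`i < j`) of `D_N`. -/
def dnRootProd {N : ℕ} (v : Fin N → ℝ) : ℝ :=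
  ∏ p ∈ Finset.univ.filter (fun p : Fin N × Fin N => p.1 < p.2),
    ((v p.1 - v p.2) * (v p.1 + v p.2))

theorem Finset.prod_filter_fst_lt_snd {α M : Type*} [Fintype α] [Preorder α]
    [LocallyFiniteOrderTop α] [DecidableLT α] [CommMonoid M] (f : α × α → M) :
    ∏ x ∈ univ.filter (fun x : α × α => x.1 < x.2), f x = ∏ i, ∏ j ∈ Ioi i, f (i, j) := by
  rw [prod_filter, Fintype.prod_prod_type]
  refine prod_congr rfl fun i _ => ?_
  rw [← prod_filter, filter_lt_eq_Ioi]

theorem dnRootProd_eq_neg_one_pow_mul_det_vandermonde {N : ℕ} (v : Fin N → ℝ) :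
    dnRootProd v = (-1) ^ #(univ.filter fun x : Fin N × Fin N => x.1 < x.2) *
      (Matrix.vandermonde fun i => v i ^ 2).det := by
  rw [Matrix.det_vandermonde, ← prod_filter_fst_lt_snd (fun x => v x.2 ^ 2 - v x.1 ^ 2),
    ← prod_const, ← prod_mul_distrib, dnRootProd]
  exact prod_congr rfl fun x _ => by ring

theorem dnRootProd_comp_perm {N : ℕ} (v : Fin N → ℝ) (σ : Perm (Fin N)) :
    dnRootProd (v ∘ σ) = (Perm.sign σ : ℤ) * dnRootProd v := by
  rw [dnRootProd_eq_neg_one_pow_mul_det_vandermonde,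
    dnRootProd_eq_neg_one_pow_mul_det_vandermonde,
    show (Matrix.vandermonde fun i => (v ∘ σ) i ^ 2)
      = (Matrix.vandermonde fun i => v i ^ 2).submatrix σ id from rfl,
    Matrix.det_permute]
  ring

theorem dnRootProd_comp_perm_eq_or_eq_neg {N : ℕ} (v : Fin N → ℝ) (σ : Perm (Fin N)) :
    dnRootProd (v ∘ σ) = dnRootProd v ∨ dnRootProd (v ∘ σ) = -dnRootProd v := by
  rcases Int.units_eq_one_or (Perm.sign σ) with h | h <;> simp [dnRootProd_comp_perm, h]

theorem Fin.val_cycleIcc_one {N p : ℕ} (hp : 1 ≤ p) (hpN : p < N) (i : Fin N) :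
    (cycleIcc ⟨1, by omega⟩ ⟨p, hpN⟩ i : ℕ) =
      if (i : ℕ) = 0 then 0 else if (i : ℕ) < p then (i : ℕ) + 1 else if (i : ℕ) = p then 1
      else (i : ℕ) := by
  have : NeZero N := ⟨by omega⟩
  split_ifs with h0 hlt hep
  · rw [cycleIcc_of_lt (show (i : ℕ) < 1 by omega), h0]
  · rw [cycleIcc_of_ge_of_lt (show 1 ≤ (i : ℕ) by omega) hlt,
      val_add, val_one', Nat.add_mod_mod, Nat.mod_eq_of_lt (by omega)]
  · rw [show i = ⟨p, hpN⟩ from Fin.ext hep, cycleIcc_of_last (show 1 ≤ p from hp)]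
  · rw [cycleIcc_of_gt (show p < (i : ℕ) by omega)]

def rhoG (N : ℕ) (i : Fin N) : ℝ := (N : ℝ) - 1 - (i : ℕ)

def rhoK (p q' : ℕ) (i : Fin (p + q')) : ℝ :=
  if (i : ℕ) < p then (p : ℝ) - 1 - (i : ℕ) else (q' : ℝ) - 1 - ((i : ℕ) - p : ℕ)

def mu1 (p q' : ℕ) (i : Fin (p + q')) : ℝ :=
  if (i : ℕ) = 0 then (q' : ℝ)
  else if (i : ℕ) < p then (q' : ℝ) - 1
  else if (i : ℕ) = p then (p : ℝ) - 1
  else 0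

theorem mu1_add_rhoK_eq_rhoG_cycleIcc {p q' : ℕ} (hp : 1 ≤ p) (hq : 1 ≤ q') (i : Fin (p + q')) :
    mu1 p q' i + rhoK p q' i = rhoG (p + q') (Fin.cycleIcc ⟨1, by omega⟩ ⟨p, by omega⟩ i) := by
  rw [rhoG, Fin.val_cycleIcc_one hp, mu1, rhoK]
  obtain h | h | h | h :
      (i : ℕ) = 0 ∨ (i : ℕ) ≠ 0 ∧ (i : ℕ) < p ∨ (i : ℕ) = p ∨ p < (i : ℕ) := by omega
  · simp only [h, show 0 < p by omega, ↓reduceIte, CharP.cast_eq_zero, sub_zero, Nat.cast_add]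
    ring
  · simp only [h, ↓reduceIte, Nat.cast_add, Nat.cast_one]
    ring
  · simp only [h, show p ≠ 0 by omega, ↓reduceIte, lt_self_iff_false, tsub_self,
      CharP.cast_eq_zero, sub_zero, Nat.cast_add, Nat.cast_one]
    ring
  · simp only [show (i : ℕ) ≠ 0 by omega, h.not_gt, h.ne', ↓reduceIte, Nat.cast_sub h.le,
      zero_add, Nat.cast_add]
    ring

/-- Let `p, q' ≥ 2`, `N = p + q'`, and consider the positive roots `e_i ± e_j`
(`1 ≤ i < j ≤ N`) of `D_N` in `ℝ^N`.  With (in 0-based coordinates)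
`ρ^g_i = N - 1 - i`, `ρ^k_i = p - 1 - i` for `i < p` and `ρ^k_{p+j} = q' - 1 - j`,
and `μ₁ = q'·e_1 + (q'-1)(e_2 + ⋯ + e_p) + (p-1)·e_{p+1}`, the coordinates of
`μ₁ + ρ^k` are a permutation of those of `ρ^g`, and consequently
`∏_{α∈R⁺} ⟨μ₁ + ρ^k, α⟩ = ± ∏_{α∈R⁺} ⟨ρ^g, α⟩`. -/
theorem grassmannian_mu1_perm (p q' : ℕ) (hp : 2 ≤ p) (hq : 2 ≤ q') :
    let N := p + q'
    let ρg : Fin N → ℝ := fun i => (N : ℝ) - 1 - (i : ℕ)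
    let ρk : Fin N → ℝ := fun i =>
      if (i : ℕ) < p then (p : ℝ) - 1 - (i : ℕ) else (q' : ℝ) - 1 - ((i : ℕ) - p : ℕ)
    let μ₁ : Fin N → ℝ := fun i =>
      if (i : ℕ) = 0 then (q' : ℝ)
      else if (i : ℕ) < p then (q' : ℝ) - 1
      else if (i : ℕ) = p then (p : ℝ) - 1
      else 0
    (∃ σ : Equiv.Perm (Fin N), ∀ i, μ₁ i + ρk i = ρg (σ i)) ∧
      (dnRootProd (fun i => μ₁ i + ρk i) = dnRootProd ρg ∨
        dnRootProd (fun i => μ₁ i + ρk i) = -dnRootProd ρg) := by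
  intro N ρg ρk μ₁
  have hσ : ∀ i, μ₁ i + ρk i = ρg (Fin.cycleIcc ⟨1, by omega⟩ ⟨p, by omega⟩ i) :=
    mu1_add_rhoK_eq_rhoG_cycleIcc (by omega) (by omega)
  refine ⟨⟨_, hσ⟩, ?_⟩
  rw [show (fun i => μ₁ i + ρk i) = ρg ∘ Fin.cycleIcc ⟨1, by omega⟩ ⟨p, by omega⟩ from funext hσ]
  exact dnRootProd_comp_perm_eq_or_eq_neg ρg _
end

section
/- For a compact quaternion-Kähler manifold M^{4n} (n ≥ 2) of positive type other than Gr_2(ℂ^{n+2}), the index of the Dirac operator twisted by Sym^{n-2}H ⊗ TM^ℂ equals -(b_2(M) + b_0(M)) = -1, using the Clebsch–Gordan decomposition Sym^{n-2}H ⊗ (E ⊗ H) ≅ (Sym^{n-1}H ⊗ E) ⊕ (Sym^{n-3}H ⊗ E) and the LeBrun–Salamon index formula. -/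
/-- Formal version of the index computation for a compact quaternion-Kähler manifold
`M^{4n}` (`n ≥ 2`) of positive type other than `Gr₂(ℂ^{n+2})`.  Let `ind p q` denote
the index of the Dirac operator twisted by `Sym^p H ⊗ Λ^q₀ E` and `b` the Betti
numbers.  The LeBrun–Salamon index formula states `ind p q = 0` for `p + q < n` and
`ind p q = (-1)^q (b_{2q} + b_{2q-2})` for `p + q = n` (with `b_{-2} = 0`).  Since
`M ≠ Gr₂(ℂ^{n+2})` we have `b₂ = 0`, and `b₀ = 1`.  By the Clebsch–Gordan
decomposition `Sym^{n-2}H ⊗ TM^ℂ = Sym^{n-2}H ⊗ (E ⊗ H) ≅ (Sym^{n-1}H ⊗ E) ⊕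
(Sym^{n-3}H ⊗ E)`, the index `indT` of the Dirac operator twisted by
`Sym^{n-2}H ⊗ TM^ℂ` equals `ind (n-1) 1 + ind (n-3) 1`.  Conclusion:
`indT = -(b₂ + b₀) = -1`. -/
theorem qk_twisted_index_eq_neg_one (n : ℕ) (hn : 2 ≤ n)
    (b : ℕ → ℤ) (ind : ℕ → ℕ → ℤ) (indT : ℤ)
    (hvanish : ∀ p q : ℕ, p + q < n → ind p q = 0)
    (htop : ∀ p q : ℕ, p + q = n →
      ind p q = (-1) ^ q * (b (2 * q) + if q = 0 then 0 else b (2 * q - 2)))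
    (hb0 : b 0 = 1) (hb2 : b 2 = 0)
    (hCG : indT = ind (n - 1) 1 + ind (n - 3) 1) :
    indT = -(b 2 + b 0) ∧ indT = -1 := by
  have h1 : ind (n - 1) 1 = -(b 2 + b 0) := by
    have := htop (n - 1) 1 (by omega)
    simpa using this
  have h2 : ind (n - 3) 1 = 0 := hvanish (n - 3) 1 (by omega)
  constructor
  · rw [hCG, h1, h2]; ring
  · rw [hCG, h1, h2, hb0, hb2]; ring
end

section
/- For Spin(2r), the tensor product of the standard representation ℂ^{2r} (highest weight e_1) with the irreducible representation of highest weight k(e_1 + … + e_r) decomposes as the direct sum of the irreducibles with highest weights (k+1)e_1 + k(e_2 + … + e_r) and k(e_1 + … + e_{r-1}) + (k-1)e_r. -/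
/-!
The character of the standard representation is `χ = ∑ⱼ (e^{tⱼ} + e^{-tⱼ})`, and since its
weights `±eᵢ` are permuted by the Weyl group, `A_λ · χ = ∑ᵢ (A_{λ+eᵢ} + A_{λ-eᵢ})`. An
alternating sum `A_λ` vanishes as soon as `λᵢ = ±λⱼ` for some `i ≠ j`: the transposition of
`i` and `j`, combined in the second case with the (even) sign change at `i, j`, fixes `λ` and
has sign `-1`. For `λ = a·(1,…,1) + ρ` the consecutive coordinates differ by one, so only
`A_{λ+e₁}` and `A_{λ-e_r}` survive; for `a = 0` the last one vanishes too, since the last two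
coordinates of `ρ - e_r` are `1` and `-1`. Hence `A_{e₁+ρ} = A_ρ χ` and
`A_{k(1,…,1)+ρ} χ = A_{μ₁+ρ} + A_{μ₂+ρ}`, and the identity follows by multiplying.
-/

open Finset

/-- The Weyl alternating sum `A_λ = ∑_{w ∈ W(D_r)} sgn(w) e^{w(λ)}` for the root
system `D_r`, evaluated at `t ∈ ℝ^r` (with `e^μ(t) = exp⟨μ, t⟩`).  The Weyl group of
`D_r` consists of permutations combined with an even number of sign changes
(parametrized by the even-cardinality subset `S` of flipped signs); the sign of such
an element is the sign of its permutation part. -/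
noncomputable def weylAltD (r : ℕ) (lam : Fin r → ℝ) (t : Fin r → ℝ) : ℝ :=
  ∑ σ : Equiv.Perm (Fin r),
    ∑ S ∈ Finset.univ.filter (fun S : Finset (Fin r) => Even S.card),
      ((Equiv.Perm.sign σ : ℤ) : ℝ) *
        Real.exp (∑ i, (if i ∈ S then -lam i else lam i) * t (σ i))

/-- Half-sum of the positive roots `e_i ± e_j` (`i < j`) of `D_r`:
`ρ = (r-1, r-2, …, 1, 0)`. -/
def rhoD (r : ℕ) : Fin r → ℝ := fun i => (r : ℝ) - 1 - (i : ℕ)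

open scoped symmDiff

theorem Finset.card_symmDiff_add_two_mul_card_inter {α : Type*} [DecidableEq α]
    (s t : Finset α) : #(s ∆ t) + 2 * #(s ∩ t) = #s + #t := by
  rw [symmDiff_def, sup_eq_union, card_union_of_disjoint disjoint_sdiff_sdiff,
    ← card_sdiff_add_card_inter s t, ← card_sdiff_add_card_inter t s, inter_comm t s]
  ring

theorem Finset.even_card_symmDiff_iff {α : Type*} [DecidableEq α] {s t : Finset α}
    (ht : Even #t) : Even #(s ∆ t) ↔ Even #s := by
  have := card_symmDiff_add_two_mul_card_inter s t
  simp only [Nat.even_iff] at ht ⊢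
  omega

theorem sum_ite_neg_add_single_mul {ι : Type*} [Fintype ι] [DecidableEq ι] (S : Finset ι)
    (lam u : ι → ℝ) (i : ι) (c : ℝ) :
    ∑ m, (if m ∈ S then -(lam + Pi.single i c : ι → ℝ) m
        else (lam + Pi.single i c : ι → ℝ) m) * u m
      = ∑ m, (if m ∈ S then -lam m else lam m) * u m + (if i ∈ S then -c else c) * u i := by
  have hterm : ∀ m, (if m ∈ S then -(lam + Pi.single i c : ι → ℝ) m
        else (lam + Pi.single i c : ι → ℝ) m) * u m
      = (if m ∈ S then -lam m else lam m) * u m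
        + (Pi.single i ((if i ∈ S then -c else c) * u i) : ι → ℝ) m := by
    intro m
    rcases eq_or_ne m i with rfl | hmi
    · split_ifs <;> simp only [Pi.add_apply, Pi.single_eq_same] <;> ring
    · simp [hmi]
  simp only [hterm, sum_add_distrib, Fintype.sum_pi_single']

noncomputable def stdCharD (r : ℕ) (t : Fin r → ℝ) : ℝ :=
  ∑ j, (Real.exp (t j) + Real.exp (-t j))

section WeylAlternatingSum

variable {r : ℕ}

theorem weylAltD_comp_perm (lam t : Fin r → ℝ) (τ : Equiv.Perm (Fin r)) :
    weylAltD r (lam ∘ τ) t = Equiv.Perm.sign τ * weylAltD r lam t := by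
  unfold weylAltD
  rw [mul_sum, ← Equiv.sum_comp (Equiv.mulRight τ)]
  refine sum_congr rfl fun σ _ => ?_
  rw [mul_sum]
  refine sum_nbij' (·.map τ.toEmbedding) (·.map τ.symm.toEmbedding) ?_ ?_ ?_ ?_ ?_
  · simp
  · simp
  · intro S _; simp [map_map]
  · intro S _; simp [map_map]
  · intro S _
    rw [← Equiv.sum_comp τ
      (fun m => (if m ∈ S.map τ.toEmbedding then -lam m else lam m) * t (σ m))]
    simp [mul_comm, mul_left_comm]

theorem weylAltD_ite_neg_of_even_card (lam t : Fin r → ℝ) {T : Finset (Fin r)}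
    (hT : Even #T) :
    weylAltD r (fun i => if i ∈ T then -lam i else lam i) t = weylAltD r lam t := by
  unfold weylAltD
  refine sum_congr rfl fun σ _ => ?_
  refine sum_nbij' (· ∆ T) (· ∆ T) ?_ ?_ ?_ ?_ ?_
  · simp [even_card_symmDiff_iff hT]
  · simp [even_card_symmDiff_iff hT]
  · intro S _; simp [symmDiff_symmDiff_cancel_right]
  · intro S _; simp [symmDiff_symmDiff_cancel_right]
  · intro S _
    congr 2
    refine sum_congr rfl fun i _ => ?_
    by_cases hS : i ∈ S <;> by_cases hT : i ∈ T <;> simp [mem_symmDiff, hS, hT]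

theorem weylAltD_eq_zero_of_apply_eq (lam t : Fin r → ℝ) {i j : Fin r} (hij : i ≠ j)
    (h : lam i = lam j) : weylAltD r lam t = 0 := by
  have hswap : lam ∘ Equiv.swap i j = lam := by
    ext m
    rcases eq_or_ne m i with rfl | hmi
    · simp [h]
    rcases eq_or_ne m j with rfl | hmj
    · simp [h]
    · simp [Equiv.swap_apply_of_ne_of_ne hmi hmj]
  have := weylAltD_comp_perm lam t (Equiv.swap i j)
  rw [hswap, Equiv.Perm.sign_swap hij] at this
  push_cast at this
  linarith

theorem weylAltD_eq_zero_of_apply_eq_neg (lam t : Fin r → ℝ) {i j : Fin r} (hij : i ≠ j)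
    (h : lam i = -lam j) : weylAltD r lam t = 0 := by
  set lam' : Fin r → ℝ := fun m => if m ∈ ({i, j} : Finset (Fin r)) then -lam m else lam m
  have hswap : lam' ∘ Equiv.swap i j = lam := by
    ext m
    rcases eq_or_ne m i with rfl | hmi
    · simp [lam', h]
    rcases eq_or_ne m j with rfl | hmj
    · simp [lam', h]
    · simp [lam', Equiv.swap_apply_of_ne_of_ne hmi hmj, hmi, hmj]
  have := weylAltD_comp_perm lam' t (Equiv.swap i j)
  rw [hswap, Equiv.Perm.sign_swap hij,
    weylAltD_ite_neg_of_even_card lam t (by simp [card_pair hij])] at this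
  push_cast at this
  linarith

theorem weylAltD_mul_stdCharD (lam t : Fin r → ℝ) :
    weylAltD r lam t * stdCharD r t =
      ∑ i, (weylAltD r (lam + Pi.single i 1) t + weylAltD r (lam - Pi.single i (1 : ℝ)) t) := by
  unfold weylAltD stdCharD
  simp only [sum_mul, ← sum_add_distrib]
  conv_rhs => rw [sum_comm]
  refine sum_congr rfl fun σ _ => ?_
  conv_rhs => rw [sum_comm]
  refine sum_congr rfl fun S _ => ?_
  rw [← Equiv.sum_comp σ (fun j => Real.exp (t j) + Real.exp (-t j)), mul_sum]
  refine sum_congr rfl fun i _ => ?_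
  rw [sub_eq_add_neg, ← Pi.single_neg, sum_ite_neg_add_single_mul S lam (fun m => t (σ m)),
    sum_ite_neg_add_single_mul S lam (fun m => t (σ m))]
  split_ifs <;> simp only [neg_neg, neg_mul, one_mul, Real.exp_add] <;> ring

theorem weylAltD_const_add_rhoD_add_single_eq_zero (a : ℝ) (t : Fin r → ℝ) {i : Fin r}
    (hi : (i : ℕ) ≠ 0) : weylAltD r ((fun j => a + rhoD r j) + Pi.single i 1) t = 0 := by
  have hne : i ≠ ⟨i - 1, by omega⟩ := Fin.ne_of_val_ne (by dsimp only; omega)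
  refine weylAltD_eq_zero_of_apply_eq _ t hne ?_
  simp only [Pi.add_apply, Pi.single_eq_same, Pi.single_eq_of_ne hne.symm, rhoD]
  push_cast [Nat.cast_sub (Nat.one_le_iff_ne_zero.mpr hi)]
  ring

theorem weylAltD_const_add_rhoD_sub_single_eq_zero (a : ℝ) (t : Fin r → ℝ) {i : Fin r}
    (hi : (i : ℕ) + 1 ≠ r) : weylAltD r ((fun j => a + rhoD r j) - Pi.single i 1) t = 0 := by
  have hne : i ≠ ⟨i + 1, by omega⟩ := Fin.ne_of_val_ne (by dsimp only; omega)
  refine weylAltD_eq_zero_of_apply_eq _ t hne ?_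
  simp only [Pi.sub_apply, Pi.single_eq_same, Pi.single_eq_of_ne hne.symm, rhoD]
  push_cast
  ring

theorem weylAltD_const_add_rhoD_mul_stdCharD (hr : 0 < r) (a : ℝ) (t : Fin r → ℝ) :
    weylAltD r (fun i => a + rhoD r i) t * stdCharD r t =
      weylAltD r (fun i => (if (i : ℕ) = 0 then a + 1 else a) + rhoD r i) t
        + weylAltD r (fun i => (if (i : ℕ) = r - 1 then a - 1 else a) + rhoD r i) t := by
  have hlast : r - 1 < r := by omega
  rw [weylAltD_mul_stdCharD, sum_add_distrib]
  congr 1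
  · rw [sum_eq_single_of_mem ⟨0, hr⟩ (mem_univ _) fun i _ hi =>
      weylAltD_const_add_rhoD_add_single_eq_zero a t (by simpa [Fin.ext_iff] using hi)]
    congr 1
    ext i
    simp only [Pi.add_apply, Pi.single_apply, Fin.ext_iff]
    split_ifs <;> ring
  · rw [sum_eq_single_of_mem ⟨r - 1, hlast⟩ (mem_univ _) fun i _ hi =>
      weylAltD_const_add_rhoD_sub_single_eq_zero a t
        (by simp only [ne_eq, Fin.ext_iff] at hi; omega)]
    congr 1
    ext i
    simp only [Pi.sub_apply, Pi.single_apply, Fin.ext_iff]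
    split_ifs <;> ring

theorem weylAltD_rhoD_mul_stdCharD (hr : 2 ≤ r) (t : Fin r → ℝ) :
    weylAltD r (rhoD r) t * stdCharD r t =
      weylAltD r (fun i => (if (i : ℕ) = 0 then 1 else 0) + rhoD r i) t := by
  have hvanish :
      weylAltD r (fun i => (if (i : ℕ) = r - 1 then (-1 : ℝ) else 0) + rhoD r i) t = 0 := by
    have hne : (⟨r - 2, by omega⟩ : Fin r) ≠ ⟨r - 1, by omega⟩ :=
      Fin.ne_of_val_ne (by dsimp only; omega)
    refine weylAltD_eq_zero_of_apply_eq_neg _ t hne ?_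
    simp only [show r - 2 ≠ r - 1 by omega, ↓reduceIte, rhoD]
    push_cast [Nat.cast_sub hr, Nat.cast_sub (by omega : 1 ≤ r)]
    ring
  simpa [hvanish] using weylAltD_const_add_rhoD_mul_stdCharD (by omega) 0 t

end WeylAlternatingSum

theorem spin2r_tensor_spinpower_decomp_general (r k : ℕ) (hr : 2 ≤ r)
    (t : Fin r → ℝ) :
    let e₁ : Fin r → ℝ := fun i => if (i : ℕ) = 0 then 1 else 0
    let lam : Fin r → ℝ := fun _ => (k : ℝ)
    let μ₁ : Fin r → ℝ := fun i => if (i : ℕ) = 0 then (k : ℝ) + 1 else (k : ℝ)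
    let μ₂ : Fin r → ℝ := fun i => if (i : ℕ) = r - 1 then (k : ℝ) - 1 else (k : ℝ)
    weylAltD r (fun i => e₁ i + rhoD r i) t * weylAltD r (fun i => lam i + rhoD r i) t
      = (weylAltD r (fun i => μ₁ i + rhoD r i) t
          + weylAltD r (fun i => μ₂ i + rhoD r i) t) * weylAltD r (rhoD r) t := by
  intro e₁ lam μ₁ μ₂
  rw [← weylAltD_rhoD_mul_stdCharD hr, ← weylAltD_const_add_rhoD_mul_stdCharD (by omega)]
  ring

/-- For `Spin(2r)`, the tensor product of the standard representation `ℂ^{2r}`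
(highest weight `e₁`) with the irreducible representation of highest weight
`k(e₁ + ⋯ + e_r)` is the direct sum of the irreducibles of highest weights
`(k+1)e₁ + k(e₂ + ⋯ + e_r)` and `k(e₁ + ⋯ + e_{r-1}) + (k-1)e_r`.  By the Weyl
character formula (`χ_λ = A_{λ+ρ}/A_ρ`), and since representations of the compact
group `Spin(2r)` are determined by their characters, this is the identity
`A_{e₁+ρ} · A_{k(1,…,1)+ρ} = (A_{μ₁+ρ} + A_{μ₂+ρ}) · A_ρ`. -/
theorem spin2r_tensor_spinpower_decomp (r k : ℕ) (hr : 2 ≤ r) (hk : 1 ≤ k)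
    (t : Fin r → ℝ) :
    let e₁ : Fin r → ℝ := fun i => if (i : ℕ) = 0 then 1 else 0
    let lam : Fin r → ℝ := fun _ => (k : ℝ)
    let μ₁ : Fin r → ℝ := fun i => if (i : ℕ) = 0 then (k : ℝ) + 1 else (k : ℝ)
    let μ₂ : Fin r → ℝ := fun i => if (i : ℕ) = r - 1 then (k : ℝ) - 1 else (k : ℝ)
    weylAltD r (fun i => e₁ i + rhoD r i) t * weylAltD r (fun i => lam i + rhoD r i) t
      = (weylAltD r (fun i => μ₁ i + rhoD r i) t
          + weylAltD r (fun i => μ₂ i + rhoD r i) t) * weylAltD r (rhoD r) t :=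
  spin2r_tensor_spinpower_decomp_general r k hr t
end
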